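/- For every m ∈ {1, …, l}, the sum of the residues of Υ_{m,m,m} at μ = κ_m and at μ = κ_m^{−1} exists and equals q_m := Σ_{n=1,…,l, n≠m} κ_n(1 − κ_m²)/((κ_m − κ_n)(κ_m·κ_n − 1)). Precisely: there exists ε > 0 such that for every r with 0 < r < ε, (2πi)^{−1}·(∮_{|μ−κ_m|=r} Υ_{m,m,m}(μ) dμ + ∮_{|μ−κ_m^{−1}|=r} Υ_{m,m,m}(μ) dμ) = q_m. -/

import Mathlib

open Complex Filter Topology

/-- The factor `-κ_m/(μ-κ_m) + κ_m⁻¹/(μ-κ_m⁻¹)` for an index `m ≤ l`, and `1`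
for the index `m = l+1`. -/
noncomputable def upsFactor (l : ℕ) (κ : ℕ → ℂ) (m : ℕ) (μ : ℂ) : ℂ :=
  if m ≤ l then -κ m / (μ - κ m) + (κ m)⁻¹ / (μ - (κ m)⁻¹) else 1

/-- The denominator
`D(μ) = ∑_{r=1}^l (1/(μ-κ_r) + 1/(μ-κ_r⁻¹)) - (l-2)/μ - 4μ/(μ²-1)`. -/
noncomputable def upsD (l : ℕ) (κ : ℕ → ℂ) (μ : ℂ) : ℂ :=
  (∑ r ∈ Finset.Icc 1 l, (1 / (μ - κ r) + 1 / (μ - (κ r)⁻¹)))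
    - ((l : ℂ) - 2) / μ - 4 * μ / (μ ^ 2 - 1)

/-- The integrand `Υ_{ijk}(μ) = -N_{ijk}(μ) / (2 μ² D(μ))` computing the residue
contributions to the dual Landau–Ginzburg product of the `D_l` relativistic
Toda spectral curve. -/
noncomputable def Ups (l : ℕ) (κ : ℕ → ℂ) (i j k : ℕ) (μ : ℂ) : ℂ :=
  -(upsFactor l κ i μ * upsFactor l κ j μ * upsFactor l κ k μ)
    / (2 * μ ^ 2 * upsD l κ μ)

/-! Put `c = κ_m` and split `D = 1/(μ-c) + 1/(μ-c⁻¹) + E` with `E` holomorphic near `c` and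
`c⁻¹`. Multiplying the factor of `N` and `D` by `μ - c` shows `Υ_{mmm} = (μ-c)⁻² g` near `c` with
`g` holomorphic, so by Cauchy's formula the residue at `c` is
`g'(c) = -((3c² + 1)/(2(c² - 1)) + c E(c)/2) = (l - 1 - c S(c))/2`, where `S` is the part of `D`
coming from the poles `κ_n^{±1}`, `n ≠ m`. Everything is symmetric under `c ↦ c⁻¹` except that the
factor of `N` changes sign, so the residue at `c⁻¹` is `-(l - 1 - c⁻¹ S(c⁻¹))/2`. The sum of the
two residues, `(c⁻¹ S(c⁻¹) - c S(c))/2`, is `q_m` by partial fractions, term by term. -/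

lemma sub_inv_ne_zero_of_sq_ne_one {c : ℂ} (hc0 : c ≠ 0) (hc1 : c ^ 2 ≠ 1) : c - c⁻¹ ≠ 0 := by
  intro h
  apply hc1
  field_simp at h
  linear_combination h

noncomputable def invPairFactor (c z : ℂ) : ℂ :=
  -c / (z - c) + c⁻¹ / (z - c⁻¹)

noncomputable def invPairIntegrand (E : ℂ → ℂ) (c z : ℂ) : ℂ :=
  -invPairFactor c z ^ 3 / (2 * z ^ 2 * (1 / (z - c) + 1 / (z - c⁻¹) + E z))

noncomputable def invPairRegularPart (E : ℂ → ℂ) (c z : ℂ) : ℂ :=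
  -(-c + c⁻¹ * (z - c) / (z - c⁻¹)) ^ 3 / (2 * z ^ 2 * (1 + (z - c) * (1 / (z - c⁻¹) + E z)))

lemma invPairIntegrand_inv (E : ℂ → ℂ) (c : ℂ) :
    invPairIntegrand E c⁻¹ = -invPairIntegrand E c := by
  funext z
  simp only [Pi.neg_apply, invPairIntegrand, invPairFactor, inv_inv]
  ring

lemma invPairIntegrand_eq_regularPart (E : ℂ → ℂ) {c z : ℂ} (hc : z ≠ c) (hc' : z ≠ c⁻¹) :
    invPairIntegrand E c z = 1 / (z - c) ^ 2 * invPairRegularPart E c z := by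
  have hu : z - c ≠ 0 := sub_ne_zero.2 hc
  have hv : z - c⁻¹ ≠ 0 := sub_ne_zero.2 hc'
  have hF : invPairFactor c z = (-c + c⁻¹ * (z - c) / (z - c⁻¹)) / (z - c) := by
    simp only [invPairFactor]; field_simp
  have hD : 1 / (z - c) + 1 / (z - c⁻¹) + E z =
      (1 + (z - c) * (1 / (z - c⁻¹) + E z)) / (z - c) := by
    field_simp; ring
  rw [invPairIntegrand, invPairRegularPart, hF, hD]
  generalize -c + c⁻¹ * (z - c) / (z - c⁻¹) = P
  generalize 1 + (z - c) * (1 / (z - c⁻¹) + E z) = G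
  generalize z - c = u at hu ⊢
  by_cases hG : G = 0
  · simp [hG]
  by_cases hz : z = 0
  · simp [hz]
  field_simp

lemma hasDerivAt_invPairRegularPart {E : ℂ → ℂ} {c e' : ℂ} (hc0 : c ≠ 0) (hc1 : c ^ 2 ≠ 1)
    (hE : HasDerivAt E e' c) :
    HasDerivAt (invPairRegularPart E c)
      (-((3 * c ^ 2 + 1) / (2 * (c ^ 2 - 1)) + c * E c / 2)) c := by
  have hcc : c - c⁻¹ ≠ 0 := sub_inv_ne_zero_of_sq_ne_one hc0 hc1
  have hw : HasDerivAt (fun z => z - c⁻¹) 1 c := (hasDerivAt_id c).sub_const _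
  have hu : HasDerivAt (fun z => z - c) 1 c := (hasDerivAt_id c).sub_const _
  have hP := (((hu.const_mul c⁻¹).div hw hcc).const_add (-c)).pow 3
  have hG := (hu.mul (((hasDerivAt_const c (1 : ℂ)).div hw hcc).add hE)).const_add 1
  have hden := ((hasDerivAt_pow 2 c).const_mul (2 : ℂ)).mul hG
  have hden0 : 2 * c ^ 2 * (1 + (c - c) * (1 / (c - c⁻¹) + E c)) ≠ 0 := by simp [hc0]
  refine (hP.neg.div hden hden0).congr_deriv ?_
  have hsq : c ^ 2 - 1 ≠ 0 := sub_ne_zero.2 hc1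
  simp only [Pi.div_apply, Pi.mul_apply, Pi.add_apply, Pi.neg_apply, Pi.pow_apply, sub_self,
    zero_mul, mul_zero, zero_div, add_zero, Nat.cast_ofNat]
  field_simp
  ring

lemma eventually_differentiableAt_invPairRegularPart {E : ℂ → ℂ} {c : ℂ} (hc0 : c ≠ 0)
    (hc1 : c ^ 2 ≠ 1) (hE : ∀ᶠ z in 𝓝 c, DifferentiableAt ℂ E z) :
    ∀ᶠ z in 𝓝 c, DifferentiableAt ℂ (invPairRegularPart E c) z := by
  have hcc : c - c⁻¹ ≠ 0 := sub_inv_ne_zero_of_sq_ne_one hc0 hc1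
  have hEc := hE.self_of_nhds.continuousAt
  have hG : ContinuousAt (fun z => 1 + (z - c) * (1 / (z - c⁻¹) + E z)) c := by
    fun_prop (disch := exact hcc)
  filter_upwards [hE, eventually_ne_nhds hc0, eventually_ne_nhds (sub_ne_zero.1 hcc),
    hG.eventually_ne (by simp : 1 + (c - c) * (1 / (c - c⁻¹) + E c) ≠ 0)]
    with z hEz hz0 hzc hGz
  have hzc' : z - c⁻¹ ≠ 0 := sub_ne_zero.2 hzc
  unfold invPairRegularPart
  fun_prop (disch := first
    | exact hzc'
    | exact mul_ne_zero (mul_ne_zero two_ne_zero (pow_ne_zero 2 hz0)) hGz)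

lemma eventually_circleIntegral_eq_deriv_of_eq_div_sq {f g : ℂ → ℂ} {c : ℂ}
    (hfg : ∀ᶠ z in 𝓝[≠] c, f z = 1 / (z - c) ^ 2 * g z)
    (hg : ∀ᶠ z in 𝓝 c, DifferentiableAt ℂ g z) :
    ∀ᶠ r in 𝓝[>] (0 : ℝ), (2 * Real.pi * I)⁻¹ * (∮ z in C(c, r), f z) = deriv g c := by
  rw [eventually_nhdsWithin_iff] at hfg
  obtain ⟨ε, hε, hball⟩ := Metric.eventually_nhds_iff_ball.1 (hfg.and hg)
  filter_upwards [Ioo_mem_nhdsGT hε] with r ⟨hr0, hrε⟩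
  have hsub : Metric.closedBall c r ⊆ Metric.ball c ε := Metric.closedBall_subset_ball hrε
  have hint : (∮ z in C(c, r), f z) = ∮ z in C(c, r), (1 / (z - c) ^ 2) • g z := by
    refine circleIntegral.integral_congr hr0.le fun z hz => ?_
    refine (hball z (hsub (Metric.sphere_subset_closedBall hz))).1 ?_
    rintro rfl
    simp [hr0.ne] at hz
  rw [hint, DifferentiableOn.deriv_eq_smul_circleIntegral hr0
    fun z hz => (hball z (hsub hz)).2.differentiableWithinAt, smul_eq_mul,
    inv_mul_cancel_left₀ two_pi_I_ne_zero]

lemma eventually_circleIntegral_invPairIntegrand {E : ℂ → ℂ} {c : ℂ} (hc0 : c ≠ 0)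
    (hc1 : c ^ 2 ≠ 1) (hE : ∀ᶠ z in 𝓝 c, DifferentiableAt ℂ E z) :
    ∀ᶠ r in 𝓝[>] (0 : ℝ), (2 * Real.pi * I)⁻¹ * (∮ z in C(c, r), invPairIntegrand E c z) =
      -((3 * c ^ 2 + 1) / (2 * (c ^ 2 - 1)) + c * E c / 2) := by
  have hcc : c ≠ c⁻¹ := sub_ne_zero.1 (sub_inv_ne_zero_of_sq_ne_one hc0 hc1)
  have hfg : ∀ᶠ z in 𝓝[≠] c,
      invPairIntegrand E c z = 1 / (z - c) ^ 2 * invPairRegularPart E c z := by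
    filter_upwards [self_mem_nhdsWithin, nhdsWithin_le_nhds (eventually_ne_nhds hcc)]
      with z hz hz'
    exact invPairIntegrand_eq_regularPart E hz hz'
  rw [← (hasDerivAt_invPairRegularPart hc0 hc1 hE.self_of_nhds.hasDerivAt).deriv]
  exact eventually_circleIntegral_eq_deriv_of_eq_div_sq hfg
    (eventually_differentiableAt_invPairRegularPart hc0 hc1 hE)

lemma partial_fractions_inv_pair {a k : ℂ} (ha : a ≠ 0) (hk : k ≠ 0) (hak : a ≠ k)
    (hak' : a * k ≠ 1) :
    k * (1 - a ^ 2) / ((a - k) * (a * k - 1)) =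
      (a⁻¹ * (1 / (a⁻¹ - k) + 1 / (a⁻¹ - k⁻¹)) - a * (1 / (a - k) + 1 / (a - k⁻¹))) / 2 := by
  have h1 : a - k ≠ 0 := sub_ne_zero.2 hak
  have h2 : a * k - 1 ≠ 0 := sub_ne_zero.2 hak'
  have h2' : k * a - 1 ≠ 0 := by rwa [mul_comm]
  rw [show a - k⁻¹ = (a * k - 1) / k by field_simp,
    show a⁻¹ - k = -((a * k - 1) / a) by field_simp; ring,
    show a⁻¹ - k⁻¹ = -((a - k) / (a * k)) by field_simp; ring]
  field_simp
  ring

section upsilon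

variable {l : ℕ} {κ : ℕ → ℂ} {m : ℕ}

noncomputable def upsPoleSum (l : ℕ) (κ : ℕ → ℂ) (m : ℕ) (z : ℂ) : ℂ :=
  ∑ n ∈ (Finset.Icc 1 l).erase m, (1 / (z - κ n) + 1 / (z - (κ n)⁻¹))

noncomputable def upsDRest (l : ℕ) (κ : ℕ → ℂ) (m : ℕ) (z : ℂ) : ℂ :=
  upsPoleSum l κ m z - ((l : ℂ) - 2) / z - 4 * z / (z ^ 2 - 1)

lemma Ups_eq_invPairIntegrand (hm : m ∈ Finset.Icc 1 l) :
    Ups l κ m m m = invPairIntegrand (upsDRest l κ m) (κ m) := by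
  funext z
  have hD : upsD l κ z = 1 / (z - κ m) + 1 / (z - (κ m)⁻¹) + upsDRest l κ m z := by
    rw [upsD, upsDRest, upsPoleSum, ← Finset.add_sum_erase _ _ hm]
    ring
  rw [Ups, upsFactor, if_pos (Finset.mem_Icc.1 hm).2, hD, invPairIntegrand, invPairFactor]
  ring

lemma eventually_differentiableAt_upsDRest {c : ℂ} (hc0 : c ≠ 0) (hc1 : c ^ 2 ≠ 1)
    (hc : ∀ n ∈ (Finset.Icc 1 l).erase m, c ≠ κ n ∧ c ≠ (κ n)⁻¹) :
    ∀ᶠ z in 𝓝 c, DifferentiableAt ℂ (upsDRest l κ m) z := by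
  have hsq : ContinuousAt (fun z : ℂ => z ^ 2 - 1) c := by fun_prop
  filter_upwards [eventually_ne_nhds hc0, hsq.eventually_ne (sub_ne_zero.2 hc1),
    (Finset.eventually_all _).2 fun n hn =>
      (eventually_ne_nhds (hc n hn).1).and (eventually_ne_nhds (hc n hn).2)]
    with z hz0 hz1 hzn
  unfold upsDRest upsPoleSum
  fun_prop (disch := first
    | exact hz0
    | exact hz1
    | exact sub_ne_zero.2 (hzn _ ‹_›).1
    | exact sub_ne_zero.2 (hzn _ ‹_›).2)

lemma eventually_circleIntegral_invPairIntegrand_upsDRest {c : ℂ} (hc0 : c ≠ 0)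
    (hc1 : c ^ 2 ≠ 1) (hc : ∀ n ∈ (Finset.Icc 1 l).erase m, c ≠ κ n ∧ c ≠ (κ n)⁻¹) :
    ∀ᶠ r in 𝓝[>] (0 : ℝ),
      (2 * Real.pi * I)⁻¹ * (∮ z in C(c, r), invPairIntegrand (upsDRest l κ m) c z) =
        ((l : ℂ) - 1 - c * upsPoleSum l κ m c) / 2 := by
  have hsq : c ^ 2 - 1 ≠ 0 := sub_ne_zero.2 hc1
  have hres : -((3 * c ^ 2 + 1) / (2 * (c ^ 2 - 1)) + c * upsDRest l κ m c / 2) =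
      ((l : ℂ) - 1 - c * upsPoleSum l κ m c) / 2 := by
    rw [upsDRest]
    field_simp
    ring
  rw [← hres]
  exact eventually_circleIntegral_invPairIntegrand hc0 hc1
    (eventually_differentiableAt_upsDRest hc0 hc1 hc)

lemma sum_eq_upsPoleSum_sub
    (hκ : ∀ n ∈ (Finset.Icc 1 l).erase m, κ n ≠ 0 ∧ κ m ≠ κ n ∧ κ m * κ n ≠ 1)
    (hm0 : κ m ≠ 0) :
    ∑ n ∈ (Finset.Icc 1 l).erase m, κ n * (1 - κ m ^ 2) / ((κ m - κ n) * (κ m * κ n - 1)) =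
      ((κ m)⁻¹ * upsPoleSum l κ m (κ m)⁻¹ - κ m * upsPoleSum l κ m (κ m)) / 2 := by
  rw [upsPoleSum, upsPoleSum, Finset.mul_sum, Finset.mul_sum, ← Finset.sum_sub_distrib,
    Finset.sum_div]
  exact Finset.sum_congr rfl fun n hn =>
    partial_fractions_inv_pair hm0 (hκ n hn).1 (hκ n hn).2.1 (hκ n hn).2.2

end upsilon

theorem stmt5_general (l : ℕ) (κ : ℕ → ℂ)
    (hκ : ∀ r ∈ Finset.Icc 1 l, κ r ≠ 0 ∧ κ r ≠ 1 ∧ κ r ≠ -1)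
    (hκ' : ∀ r ∈ Finset.Icc 1 l, ∀ s ∈ Finset.Icc 1 l, r ≠ s →
      κ r ≠ κ s ∧ κ r * κ s ≠ 1)
    (m : ℕ) (hm : m ∈ Finset.Icc 1 l) :
    ∃ ε > (0 : ℝ), ∀ r : ℝ, 0 < r → r < ε →
      (2 * Real.pi * Complex.I)⁻¹ *
        ((∮ μ in C(κ m, r), Ups l κ m m m μ) +
          (∮ μ in C((κ m)⁻¹, r), Ups l κ m m m μ)) =
      ∑ n ∈ (Finset.Icc 1 l).erase m,
        κ n * (1 - κ m ^ 2) / ((κ m - κ n) * (κ m * κ n - 1)) := by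
  obtain ⟨ha0, ha1, ha1'⟩ := hκ m hm
  have hsq : κ m ^ 2 ≠ 1 := by simp [sq_eq_one_iff, ha1, ha1']
  have hsq' : (κ m)⁻¹ ^ 2 ≠ 1 := by rwa [inv_pow, inv_ne_one]
  have hgen : ∀ n ∈ (Finset.Icc 1 l).erase m, κ n ≠ 0 ∧ κ m ≠ κ n ∧ κ m * κ n ≠ 1 :=
    fun n hn => ⟨(hκ n (Finset.mem_of_mem_erase hn)).1,
      hκ' m hm n (Finset.mem_of_mem_erase hn) (Finset.ne_of_mem_erase hn).symm⟩
  have hreg : ∀ n ∈ (Finset.Icc 1 l).erase m, κ m ≠ κ n ∧ κ m ≠ (κ n)⁻¹ := fun n hn =>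
    ⟨(hgen n hn).2.1, fun h => (hgen n hn).2.2 (by rw [h, inv_mul_cancel₀ (hgen n hn).1])⟩
  have hreg' : ∀ n ∈ (Finset.Icc 1 l).erase m, (κ m)⁻¹ ≠ κ n ∧ (κ m)⁻¹ ≠ (κ n)⁻¹ := fun n hn =>
    ⟨fun h => (hreg n hn).2 (inv_eq_iff_eq_inv.1 h), fun h => (hreg n hn).1 (inv_injective h)⟩
  obtain ⟨ε, hε, hres⟩ := (nhdsGT_basis (0 : ℝ)).eventually_iff.1
    ((eventually_circleIntegral_invPairIntegrand_upsDRest ha0 hsq hreg).and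
      (eventually_circleIntegral_invPairIntegrand_upsDRest (inv_ne_zero ha0) hsq' hreg'))
  refine ⟨ε, hε, fun r hr hrε => ?_⟩
  obtain ⟨h₁, h₂⟩ := hres ⟨hr, hrε⟩
  have hneg : (∮ μ in C((κ m)⁻¹, r), Ups l κ m m m μ) =
      -∮ μ in C((κ m)⁻¹, r), invPairIntegrand (upsDRest l κ m) (κ m)⁻¹ μ := by
    rw [Ups_eq_invPairIntegrand hm, ← inv_inv (κ m), invPairIntegrand_inv, inv_inv]
    simp only [Pi.neg_apply, circleIntegral, smul_neg, intervalIntegral.integral_neg]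
  rw [hneg, Ups_eq_invPairIntegrand hm, mul_add, mul_neg, h₁, h₂, sum_eq_upsPoleSum_sub hgen ha0]
  ring

/-- For every `m ∈ {1, …, l}`, the sum of the residues of
`Υ_{m,m,m}` at `μ = κ_m` and at `μ = κ_m⁻¹` exists and equals
`q_m = ∑_{n ≠ m} κ_n(1-κ_m²)/((κ_m-κ_n)(κ_m κ_n - 1))`, the residues being
expressed as circle integrals of sufficiently small radius. -/
theorem stmt5 (l : ℕ) (hl : 3 ≤ l) (κ : ℕ → ℂ)
    (hκ : ∀ r ∈ Finset.Icc 1 l, κ r ≠ 0 ∧ κ r ≠ 1 ∧ κ r ≠ -1)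
    (hκ' : ∀ r ∈ Finset.Icc 1 l, ∀ s ∈ Finset.Icc 1 l, r ≠ s →
      κ r ≠ κ s ∧ κ r * κ s ≠ 1)
    (m : ℕ) (hm : m ∈ Finset.Icc 1 l) :
    ∃ ε > (0 : ℝ), ∀ r : ℝ, 0 < r → r < ε →
      (2 * Real.pi * Complex.I)⁻¹ *
        ((∮ μ in C(κ m, r), Ups l κ m m m μ) +
          (∮ μ in C((κ m)⁻¹, r), Ups l κ m m m μ)) =
      ∑ n ∈ (Finset.Icc 1 l).erase m,
        κ n * (1 - κ m ^ 2) / ((κ m - κ n) * (κ m * κ n - 1)) :=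
  stmt5_general l κ hκ hκ' m hm
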